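/- For all integers a ≥ 1, d ≥ 1 and b, c ≥ 2, one has |[2*(a−1), b, c, 2*(d−1)]| = abcd − abd − acd + ab + cd − a − d + 1. -/

import Mathlib

/-!
A run of 2's is harmless: the recursion `|[2, n, …]| = 2·|[n, …]| − |[…]|` says that the
numerators `|[2*k, x, l…]|` form an arithmetic progression in `k`, so a prefix of `k` twos
changes `|[x, l…]|` by `k·(|[x, l…]| − |[l…]|)`. Applying this to the leading twos, and to the
trailing twos through `|[2*m]| = m + 1`, reduces the claim to a polynomial identity.
-/

/-- Hirzebruch–Jung numerator: |[]| = 1, |[n]| = n,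
|[n₁, n₂, …]| = n₁·|[n₂, …]| − |[n₃, …]|. -/
def hj : List ℤ → ℤ
  | [] => 1
  | [n] => n
  | n :: m :: l => n * hj (m :: l) - hj l

lemma hj_replicate_two_succ_append_sub (x : ℤ) (l : List ℤ) (k : ℕ) :
    hj (List.replicate (k + 1) 2 ++ x :: l) - hj (List.replicate k 2 ++ x :: l) =
      hj (x :: l) - hj l := by
  induction k with
  | zero =>
    rw [List.replicate_one, List.singleton_append, hj, List.replicate_zero, List.nil_append]
    ring
  | succ k ih =>
    simp only [List.replicate_succ, List.cons_append] at ih ⊢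
    rw [hj, ← ih]
    ring

lemma hj_replicate_two_append (x : ℤ) (l : List ℤ) (k : ℕ) :
    hj (List.replicate k 2 ++ x :: l) = hj (x :: l) + k * (hj (x :: l) - hj l) := by
  induction k with
  | zero => simp
  | succ k ih =>
    rw [← sub_add_cancel (hj _) (hj (List.replicate k 2 ++ x :: l)),
      hj_replicate_two_succ_append_sub, ih]
    push_cast
    ring

lemma hj_replicate_two (m : ℕ) : hj (List.replicate m 2) = m + 1 := by
  cases m with
  | zero => rfl
  | succ k =>
    rw [List.replicate_succ', hj_replicate_two_append]
    simp only [hj]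
    push_cast
    ring

lemma hj_cons_replicate_two (x : ℤ) (m : ℕ) :
    hj (x :: List.replicate m 2) = x * (m + 1) - m := by
  cases m with
  | zero => simp [hj]
  | succ k =>
    rw [List.replicate_succ, hj, ← List.replicate_succ, hj_replicate_two, hj_replicate_two]
    push_cast
    ring

theorem hj_two_a_b_c_two_d_general (a d b c : ℤ) (ha : 1 ≤ a) (hd : 1 ≤ d) :
    hj (List.replicate (a - 1).toNat 2 ++ [b, c] ++ List.replicate (d - 1).toNat 2) =
      a * b * c * d - a * b * d - a * c * d + a * b + c * d - a - d + 1 := by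
  have hk : ((a - 1).toNat : ℤ) = a - 1 := Int.toNat_of_nonneg (by omega)
  have hm : ((d - 1).toNat : ℤ) = d - 1 := Int.toNat_of_nonneg (by omega)
  rw [List.append_assoc, List.cons_append, List.cons_append, List.nil_append,
    hj_replicate_two_append, hj, hj_cons_replicate_two, hj_replicate_two, hk, hm]
  ring

theorem hj_two_a_b_c_two_d (a d b c : ℤ) (ha : 1 ≤ a) (hd : 1 ≤ d) (hb : 2 ≤ b) (hc : 2 ≤ c) :
    hj (List.replicate (a - 1).toNat 2 ++ [b, c] ++ List.replicate (d - 1).toNat 2) =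
      a * b * c * d - a * b * d - a * c * d + a * b + c * d - a - d + 1 :=
  hj_two_a_b_c_two_d_general a d b c ha hd
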